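/- arXiv:2008.02737 — 2 statements merged into one kernel-verified Lean document; each statement's English description precedes it below -/
import Mathlib

section
/- Let p ≥ d and let S* ∈ St(d,p)^n be a first-order critical point of f. If the certificate matrix C computed at S* is positive semidefinite (equivalently, its minimum eigenvalue λ_min satisfies λ_min ≥ 0), then S* is a global minimizer of f over St(d,p)^n, and Z* = S*ᵀ·S* is a global minimizer of the SDP. -/
open Matrix BigOperators

noncomputable section

/-- `SO(k)`: real special orthogonal `k × k` matrices. -/
def SOset (k : ℕ) : Set (Matrix (Fin k) (Fin k) ℝ) :=
  {Q | Qᵀ * Q = 1 ∧ Q.det = 1}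

/-- The Stiefel manifold `St(d,p)`: real `p × d` matrices with orthonormal columns. -/
def StiefelSet (d p : ℕ) : Set (Matrix (Fin p) (Fin d) ℝ) :=
  {Y | Yᵀ * Y = 1}

/-- Assemble an `n`-tuple of `p × d` blocks into a `p × (dn)` matrix. -/
def flatten {n d p : ℕ} (S : Fin n → Matrix (Fin p) (Fin d) ℝ) :
    Matrix (Fin p) (Fin n × Fin d) ℝ :=
  fun a ib => S ib.1 a ib.2

/-- The `i`-th block column of a `p × (dn)` matrix. -/
def blockCol {n d p : ℕ} (M : Matrix (Fin p) (Fin n × Fin d) ℝ) (i : Fin n) :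
    Matrix (Fin p) (Fin d) ℝ :=
  fun a b => M a (i, b)

/-- Membership of all block columns in `St(d,p)`, i.e. `S ∈ St(d,p)^n`. -/
def StProdFeas {n d p : ℕ} (M : Matrix (Fin p) (Fin n × Fin d) ℝ) : Prop :=
  ∀ i : Fin n, blockCol M i ∈ StiefelSet d p

/-- The connection Laplacian of the measurements `(E, κ, Rbar)`. -/
def connLap {n d : ℕ} (E : Finset (Fin n × Fin n)) (κ : Fin n × Fin n → ℝ)
    (Rbar : Fin n × Fin n → Matrix (Fin d) (Fin d) ℝ) :
    Matrix (Fin n × Fin d) (Fin n × Fin d) ℝ :=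
  fun x y =>
    if x.1 = y.1 then
      (∑ j : Fin n, ((if (x.1, j) ∈ E then κ (x.1, j) else 0) +
          (if (j, x.1) ∈ E then κ (j, x.1) else 0))) *
        (if x.2 = y.2 then (1 : ℝ) else 0)
    else if (x.1, y.1) ∈ E then -κ (x.1, y.1) * Rbar (x.1, y.1) x.2 y.2
    else if (y.1, x.1) ∈ E then -κ (y.1, x.1) * Rbar (y.1, x.1) y.2 x.2
    else 0

/-- SDP feasibility: positive semidefinite with identity diagonal `d × d` blocks. -/
def SDPFeasible {n d : ℕ} (Z : Matrix (Fin n × Fin d) (Fin n × Fin d) ℝ) : Prop :=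
  Z.PosSemidef ∧ ∀ (i : Fin n) (a b : Fin d), Z (i, a) (i, b) = if a = b then (1 : ℝ) else 0

/-- The objective `f(S) = trace (L Sᵀ S)`. -/
def fObj {n d p : ℕ} (L : Matrix (Fin n × Fin d) (Fin n × Fin d) ℝ)
    (S : Matrix (Fin p) (Fin n × Fin d) ℝ) : ℝ :=
  (L * (Sᵀ * S)).trace

/-- The `p × d` matrix `P = [I_d ; 0]`. -/
def Pmat (d p : ℕ) : Matrix (Fin p) (Fin d) ℝ :=
  fun a b => if (a : ℕ) = (b : ℕ) then 1 else 0

/-- The projection `Π : SO(p)^n → St(d,p)^n`, as a `p × (dn)` matrix. -/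
def bigProj {n d p : ℕ} (Q : Fin n → Matrix (Fin p) (Fin p) ℝ) :
    Matrix (Fin p) (Fin n × Fin d) ℝ :=
  flatten (fun i => Q i * Pmat d p)

/-- First-order criticality of `f` on `St(d,p)^n`: along every (componentwise) `C¹` curve
through `S` in `St(d,p)^n`, the derivative of `f ∘ γ` vanishes at `0`. -/
def IsCriticalSt {n d p : ℕ} (L : Matrix (Fin n × Fin d) (Fin n × Fin d) ℝ)
    (S : Matrix (Fin p) (Fin n × Fin d) ℝ) : Prop :=
  ∀ γ : ℝ → Matrix (Fin p) (Fin n × Fin d) ℝ,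
    (∀ a ib, ContDiff ℝ 1 fun t => γ t a ib) → (∀ t, StProdFeas (γ t)) → γ 0 = S →
    deriv (fun t => fObj L (γ t)) 0 = 0

/-- Second-order criticality of `f` on `St(d,p)^n`. -/
def IsSecondOrderCriticalSt {n d p : ℕ} (L : Matrix (Fin n × Fin d) (Fin n × Fin d) ℝ)
    (S : Matrix (Fin p) (Fin n × Fin d) ℝ) : Prop :=
  IsCriticalSt L S ∧
  ∀ γ : ℝ → Matrix (Fin p) (Fin n × Fin d) ℝ,
    (∀ a ib, ContDiff ℝ 2 fun t => γ t a ib) → (∀ t, StProdFeas (γ t)) → γ 0 = S →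
    0 ≤ iteratedDeriv 2 (fun t => fObj L (γ t)) 0

/-- First-order criticality of the Shonan objective `g = f ∘ Π` on `SO(p)^n`. -/
def IsCriticalSO {n d p : ℕ} (L : Matrix (Fin n × Fin d) (Fin n × Fin d) ℝ)
    (Q : Fin n → Matrix (Fin p) (Fin p) ℝ) : Prop :=
  ∀ γ : ℝ → (Fin n → Matrix (Fin p) (Fin p) ℝ),
    (∀ i a b, ContDiff ℝ 1 fun t => γ t i a b) → (∀ t i, γ t i ∈ SOset p) → γ 0 = Q →
    deriv (fun t => fObj L (bigProj (γ t))) 0 = 0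

/-- `SymBlockDiag`: zero out all entries outside the `n` diagonal `d × d` blocks. -/
def symBlockDiag {n d : ℕ} (M : Matrix (Fin n × Fin d) (Fin n × Fin d) ℝ) :
    Matrix (Fin n × Fin d) (Fin n × Fin d) ℝ :=
  fun x y => if x.1 = y.1 then M x y else 0

/-- The certificate matrix `C = L − (1/2)·SymBlockDiag(L SᵀS + SᵀS L)`. -/
def certMat {n d p : ℕ} (L : Matrix (Fin n × Fin d) (Fin n × Fin d) ℝ)
    (S : Matrix (Fin p) (Fin n × Fin d) ℝ) :
    Matrix (Fin n × Fin d) (Fin n × Fin d) ℝ :=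
  L - (1 / 2 : ℝ) • symBlockDiag (L * (Sᵀ * S) + (Sᵀ * S) * L)

/-- The spectral norm (ℓ² operator norm) of a square real matrix. -/
def specNorm {m : Type*} [Fintype m] [DecidableEq m] (A : Matrix m m ℝ) : ℝ :=
  ‖Matrix.toEuclideanCLM (𝕜 := ℝ) A‖

/-- Squared Frobenius norm. -/
def frobSq {m k : ℕ} (M : Matrix (Fin m) (Fin k) ℝ) : ℝ :=
  ∑ a, ∑ b, (M a b) ^ 2

/-!
For `Z` with identity diagonal blocks, `trace (SymBlockDiag M * Z) = trace M`; hence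
`trace (C Z) = trace (L Z) - trace (L S*ᵀS*)` for the certificate `C` at `S*`. As `C` and `Z`
are positive semidefinite, `trace (C Z) ≥ 0`, so `S*ᵀS*` minimizes `trace (L Z)` over the
SDP-feasible set, which contains every `SᵀS` with `S ∈ St(d,p)^n`.
-/

open scoped ComplexOrder MatrixOrder in
theorem Matrix.PosSemidef.trace_mul_nonneg {m 𝕜 : Type*} [Fintype m] [RCLike 𝕜]
    {A B : Matrix m m 𝕜} (hA : A.PosSemidef) (hB : B.PosSemidef) : 0 ≤ (A * B).trace := by
  classical
  obtain ⟨X, rfl⟩ := CStarAlgebra.nonneg_iff_eq_star_mul_self.mp hB.nonneg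
  rw [star_eq_conjTranspose, ← Matrix.mul_assoc, trace_mul_cycle]
  exact (hA.mul_mul_conjTranspose_same X).trace_nonneg

section BlockMatrices

variable {n d p : ℕ}

theorem trace_symBlockDiag_mul (M Z : Matrix (Fin n × Fin d) (Fin n × Fin d) ℝ)
    (hZ : ∀ (i : Fin n) (a b : Fin d), Z (i, a) (i, b) = if a = b then (1 : ℝ) else 0) :
    (symBlockDiag M * Z).trace = M.trace := by
  refine Finset.sum_congr rfl fun ⟨i, a⟩ _ => ?_
  show ∑ y, symBlockDiag M (i, a) y * Z y (i, a) = M (i, a) (i, a)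
  rw [Fintype.sum_prod_type, Finset.sum_eq_single i
    (fun j _ hj => by simp [symBlockDiag, Ne.symm hj]) (by simp)]
  simp [symBlockDiag, hZ]

theorem trace_certMat_mul (L : Matrix (Fin n × Fin d) (Fin n × Fin d) ℝ)
    (S : Matrix (Fin p) (Fin n × Fin d) ℝ) (Z : Matrix (Fin n × Fin d) (Fin n × Fin d) ℝ)
    (hZ : ∀ (i : Fin n) (a b : Fin d), Z (i, a) (i, b) = if a = b then (1 : ℝ) else 0) :
    (certMat L S * Z).trace = (L * Z).trace - (L * (Sᵀ * S)).trace := by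
  rw [certMat, Matrix.sub_mul, Matrix.smul_mul, trace_sub, trace_smul,
    trace_symBlockDiag_mul _ _ hZ, trace_add, trace_mul_comm (Sᵀ * S) L, smul_eq_mul]
  ring

theorem transpose_mul_self_apply_diagBlock {S : Matrix (Fin p) (Fin n × Fin d) ℝ}
    (hS : StProdFeas S) (i : Fin n) (a b : Fin d) :
    (Sᵀ * S) (i, a) (i, b) = if a = b then (1 : ℝ) else 0 := by
  simpa [mul_apply, blockCol, one_apply] using congrFun₂ (hS i) a b

theorem sdpFeasible_transpose_mul_self {S : Matrix (Fin p) (Fin n × Fin d) ℝ}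
    (hS : StProdFeas S) : SDPFeasible (Sᵀ * S) :=
  ⟨by simpa using posSemidef_conjTranspose_mul_self S, transpose_mul_self_apply_diagBlock hS⟩

theorem trace_mul_le_of_certMat_posSemidef {L : Matrix (Fin n × Fin d) (Fin n × Fin d) ℝ}
    {S : Matrix (Fin p) (Fin n × Fin d) ℝ} (hC : (certMat L S).PosSemidef)
    {Z : Matrix (Fin n × Fin d) (Fin n × Fin d) ℝ} (hZ : SDPFeasible Z) :
    (L * (Sᵀ * S)).trace ≤ (L * Z).trace := by
  have h := hC.trace_mul_nonneg hZ.1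
  rw [trace_certMat_mul L S Z hZ.2] at h
  linarith

end BlockMatrices

theorem statement4_general {n d p : ℕ} (E : Finset (Fin n × Fin n)) (κ : Fin n × Fin n → ℝ)
    (Rbar : Fin n × Fin n → Matrix (Fin d) (Fin d) ℝ)
    (Sstar : Matrix (Fin p) (Fin n × Fin d) ℝ) (hfeas : StProdFeas Sstar)
    (hcert : (certMat (connLap E κ Rbar) Sstar).PosSemidef) :
    (∀ S : Matrix (Fin p) (Fin n × Fin d) ℝ, StProdFeas S →
      fObj (connLap E κ Rbar) Sstar ≤ fObj (connLap E κ Rbar) S) ∧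
    SDPFeasible (Sstarᵀ * Sstar) ∧
    ∀ Z, SDPFeasible Z →
      (connLap E κ Rbar * (Sstarᵀ * Sstar)).trace ≤ (connLap E κ Rbar * Z).trace :=
  ⟨fun _ hS => trace_mul_le_of_certMat_posSemidef hcert (sdpFeasible_transpose_mul_self hS),
    sdpFeasible_transpose_mul_self hfeas, fun _ hZ => trace_mul_le_of_certMat_posSemidef hcert hZ⟩

/-- If the certificate matrix at a first-order critical point `S*` is positive
semidefinite, then `S*` is a global minimizer and `S*ᵀS*` solves the SDP. -/
theorem statement4 {n d p : ℕ} (hn : 1 ≤ n) (hd : 1 ≤ d) (hdp : d ≤ p)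
    (E : Finset (Fin n × Fin n)) (hE : ∀ e ∈ E, e.1 < e.2)
    (κ : Fin n × Fin n → ℝ) (hκ : ∀ e ∈ E, 0 ≤ κ e)
    (Rbar : Fin n × Fin n → Matrix (Fin d) (Fin d) ℝ)
    (hRbar : ∀ e ∈ E, Rbar e ∈ SOset d)
    (Sstar : Matrix (Fin p) (Fin n × Fin d) ℝ) (hfeas : StProdFeas Sstar)
    (hcrit : IsCriticalSt (connLap E κ Rbar) Sstar)
    (hcert : (certMat (connLap E κ Rbar) Sstar).PosSemidef) :
    (∀ S : Matrix (Fin p) (Fin n × Fin d) ℝ, StProdFeas S →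
      fObj (connLap E κ Rbar) Sstar ≤ fObj (connLap E κ Rbar) S) ∧
    SDPFeasible (Sstarᵀ * Sstar) ∧
    ∀ Z, SDPFeasible Z →
      (connLap E κ Rbar * (Sstarᵀ * Sstar)).trace ≤ (connLap E κ Rbar * Z).trace :=
  statement4_general E κ Rbar Sstar hfeas hcert
end
end

section
/- Let p ≥ d and let Q* ∈ SO(p)^n be a first-order critical point of the Shonan objective g on SO(p)^n. Then S* = Π(Q*) is a first-order critical point of f on St(d,p)^n. -/
open Matrix BigOperators

noncomputable section

/-! A tangent vector `V` to `St(d,p)^n` at `Π(Q)` satisfies `Aᵢᵀ P + Pᵀ Aᵢ = 0` for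
`Aᵢ = Qᵢᵀ Vᵢ`, which is exactly what is needed for `Vᵢ = Qᵢ Ωᵢ P` with `Ωᵢ` skew-symmetric.
The curve `t ↦ Qᵢ exp (t Ωᵢ)` stays in `SO(p)` and its image under `Π` has velocity `V` at `0`.
The derivative of `f` along a curve depends only on its position and velocity at `0`, so the
derivative of `f` along any curve in `St(d,p)^n` through `Π(Q)` equals the derivative of `g`
along the lifted curve, which vanishes. -/

open NormedSpace

section MatrixCalculus

variable {m k : Type*} [Fintype m]

open scoped Matrix.Norms.Operator in
theorem LinearMap.hasDerivAt_comp_exp_smul [DecidableEq m] (M : Matrix m m ℝ)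
    (l : Matrix m m ℝ →ₗ[ℝ] ℝ) :
    HasDerivAt (fun t : ℝ => l (exp (t • M))) (l M) 0 := by
  have h := hasDerivAt_exp_smul_const (𝕂 := ℝ) M 0
  rw [zero_smul, exp_zero, one_mul] at h
  exact l.toContinuousLinearMap.hasFDerivAt.comp_hasDerivAt 0 h

open scoped Matrix.Norms.Operator in
theorem LinearMap.contDiff_comp_exp_smul [DecidableEq m] (M : Matrix m m ℝ)
    (l : Matrix m m ℝ →ₗ[ℝ] ℝ) :
    ContDiff ℝ 1 (fun t : ℝ => l (exp (t • M))) := by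
  have hderiv : ∀ t : ℝ, HasDerivAt (fun u : ℝ => exp (u • M)) (exp (t • M) * M) t :=
    hasDerivAt_exp_smul_const M
  have hdiff : Differentiable ℝ (fun u : ℝ => exp (u • M)) :=
    fun t => (hderiv t).differentiableAt
  have hexp : ContDiff ℝ 1 (fun u : ℝ => exp (u • M)) := by
    refine contDiff_one_iff_deriv.mpr ⟨hdiff, ?_⟩
    rw [funext fun t => (hderiv t).deriv]
    exact hdiff.continuous.mul continuous_const
  exact l.toContinuousLinearMap.contDiff.comp hexp

theorem hasDerivAt_transpose_mul_apply {μ ν : ℝ → Matrix m k ℝ} {Dμ Dν : Matrix m k ℝ}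
    (hμ : ∀ a b, HasDerivAt (fun t => μ t a b) (Dμ a b) 0)
    (hν : ∀ a b, HasDerivAt (fun t => ν t a b) (Dν a b) 0) (b c : k) :
    HasDerivAt (fun t => ((μ t)ᵀ * ν t) b c) ((Dμᵀ * ν 0 + (μ 0)ᵀ * Dν) b c) 0 := by
  simp only [mul_apply, transpose_apply, Matrix.add_apply, ← Finset.sum_add_distrib]
  exact HasDerivAt.fun_sum fun a _ => (hμ a b).fun_mul (hν a c)

theorem transpose_mul_add_transpose_mul_eq_zero_of_hasDerivAt [DecidableEq k]
    {μ : ℝ → Matrix m k ℝ} {D : Matrix m k ℝ} (hμ : ∀ t, (μ t)ᵀ * μ t = 1)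
    (hD : ∀ a b, HasDerivAt (fun t => μ t a b) (D a b) 0) :
    Dᵀ * μ 0 + (μ 0)ᵀ * D = 0 := by
  ext b c
  refine (hasDerivAt_transpose_mul_apply hD hD b c).unique ?_
  simp only [hμ]
  exact hasDerivAt_const _ _

end MatrixCalculus

theorem hasDerivAt_fObj {n d p : ℕ} (L : Matrix (Fin n × Fin d) (Fin n × Fin d) ℝ)
    {μ : ℝ → Matrix (Fin p) (Fin n × Fin d) ℝ} {D : Matrix (Fin p) (Fin n × Fin d) ℝ}
    (hD : ∀ a ib, HasDerivAt (fun t => μ t a ib) (D a ib) 0) :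
    HasDerivAt (fun t => fObj L (μ t)) (L * (Dᵀ * μ 0 + (μ 0)ᵀ * D)).trace 0 := by
  simp only [fObj, trace, diag, mul_apply]
  exact HasDerivAt.fun_sum fun x _ => HasDerivAt.fun_sum fun y _ =>
    (hasDerivAt_transpose_mul_apply hD hD y x).const_mul _

section SkewLift

variable {m k : Type*} [Fintype m] [Fintype k] [DecidableEq k]

theorem exists_transpose_eq_neg_mul_eq {P A : Matrix m k ℝ} (hP : Pᵀ * P = 1)
    (hA : Aᵀ * P + Pᵀ * A = 0) : ∃ Ω : Matrix m m ℝ, Ωᵀ = -Ω ∧ Ω * P = A := by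
  have hAP : Aᵀ * P = -(Pᵀ * A) := eq_neg_of_add_eq_zero_left hA
  refine ⟨A * Pᵀ - P * Aᵀ - P * (Pᵀ * A) * Pᵀ, ?_, ?_⟩
  · simp only [transpose_sub, transpose_mul, transpose_transpose, hAP]
    simp only [Matrix.neg_mul, Matrix.mul_neg, Matrix.mul_assoc]
    abel
  · simp only [Matrix.sub_mul, Matrix.mul_assoc, hP, Matrix.mul_one]
    rw [hAP, Matrix.mul_neg, sub_neg_eq_add, add_sub_cancel_right]

variable [DecidableEq m]

theorem exists_transpose_eq_neg_mul_mul_eq {Q : Matrix m m ℝ} {P V : Matrix m k ℝ}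
    (hQ : Qᵀ * Q = 1) (hP : Pᵀ * P = 1) (hV : Vᵀ * (Q * P) + (Q * P)ᵀ * V = 0) :
    ∃ Ω : Matrix m m ℝ, Ωᵀ = -Ω ∧ Q * Ω * P = V := by
  obtain ⟨Ω, hskew, hΩ⟩ := exists_transpose_eq_neg_mul_eq (A := Qᵀ * V) hP (by
    simpa only [transpose_mul, transpose_transpose, Matrix.mul_assoc] using hV)
  refine ⟨Ω, hskew, ?_⟩
  rw [Matrix.mul_assoc, hΩ, ← Matrix.mul_assoc, mul_eq_one_comm.mp hQ, Matrix.one_mul]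

end SkewLift

theorem exp_mem_SOset {k : ℕ} {Ω : Matrix (Fin k) (Fin k) ℝ} (hΩ : Ωᵀ = -Ω) :
    exp Ω ∈ SOset k := by
  have horth : (exp Ω)ᵀ * exp Ω = 1 := by
    rw [← Matrix.exp_transpose, hΩ, ← Matrix.exp_add_of_commute _ _ (Commute.refl Ω).neg_left,
      neg_add_cancel, exp_zero]
  refine ⟨horth, ?_⟩
  have hsq : (exp Ω).det * (exp Ω).det = 1 := by
    simpa only [det_mul, det_transpose, det_one] using congrArg det horth
  -- `exp Ω = exp (Ω/2) * exp (Ω/2)`, so its determinant is a square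
  have hnonneg : 0 ≤ (exp Ω).det := by
    have hhalf : Ω = (2⁻¹ : ℝ) • Ω + (2⁻¹ : ℝ) • Ω := by rw [← add_smul]; norm_num
    rw [hhalf, Matrix.exp_add_of_commute _ _ rfl, det_mul]
    exact mul_self_nonneg _
  rcases mul_self_eq_one_iff.mp hsq with h | h
  · exact h
  · linarith

theorem mul_mem_SOset {k : ℕ} {Q R : Matrix (Fin k) (Fin k) ℝ} (hQ : Q ∈ SOset k)
    (hR : R ∈ SOset k) : Q * R ∈ SOset k := by
  refine ⟨?_, by rw [det_mul, hQ.2, hR.2, one_mul]⟩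
  rw [transpose_mul, Matrix.mul_assoc, ← Matrix.mul_assoc Qᵀ, hQ.1, Matrix.one_mul, hR.1]

theorem Pmat_transpose_mul_self {d p : ℕ} (hdp : d ≤ p) : (Pmat d p)ᵀ * Pmat d p = 1 := by
  ext b c
  simp only [mul_apply, transpose_apply, Pmat, one_apply]
  rw [Finset.sum_eq_single (Fin.castLE hdp b)]
  · simp [Fin.ext_iff]
  · intro a _ ha
    have hne : (a : ℕ) ≠ (b : ℕ) := fun h => ha (Fin.ext h)
    simp [hne]
  · simp

theorem IsCriticalSO.trace_eq_zero {n d p : ℕ} {L : Matrix (Fin n × Fin d) (Fin n × Fin d) ℝ}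
    {Q Ω : Fin n → Matrix (Fin p) (Fin p) ℝ} (hcrit : IsCriticalSO L Q)
    (hQ : ∀ i, Q i ∈ SOset p) (hΩ : ∀ i, (Ω i)ᵀ = -Ω i) :
    let S := bigProj (d := d) Q
    let V := flatten fun i => Q i * Ω i * Pmat d p
    (L * (Vᵀ * S + Sᵀ * V)).trace = 0 := by
  intro S V
  let η : ℝ → Fin n → Matrix (Fin p) (Fin p) ℝ := fun t i => Q i * exp (t • Ω i)
  have hη0 : η 0 = Q := by funext i; simp [η]
  have hη : ∀ a ib, HasDerivAt (fun t => bigProj (η t) a ib) (V a ib) 0 := by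
    rintro a ⟨i, b⟩
    exact (entryLinearMap ℝ ℝ a b ∘ₗ mulRightLinearMap (Fin p) ℝ (Pmat d p) ∘ₗ
      mulLeftLinearMap (Fin p) ℝ (Q i)).hasDerivAt_comp_exp_smul (Ω i)
  have hcontDiff : ∀ i a b, ContDiff ℝ 1 fun t => η t i a b := fun i a b =>
    (entryLinearMap ℝ ℝ a b ∘ₗ mulLeftLinearMap (Fin p) ℝ (Q i)).contDiff_comp_exp_smul (Ω i)
  have hmem : ∀ t i, η t i ∈ SOset p := fun t i =>
    mul_mem_SOset (hQ i) (exp_mem_SOset (by rw [transpose_smul, hΩ, smul_neg]))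
  have h := (hasDerivAt_fObj L hη).deriv
  rw [hcrit η hcontDiff hmem hη0, hη0] at h
  exact h.symm

theorem IsCriticalSO.isCriticalSt_bigProj {n d p : ℕ}
    {L : Matrix (Fin n × Fin d) (Fin n × Fin d) ℝ} {Q : Fin n → Matrix (Fin p) (Fin p) ℝ}
    (hcrit : IsCriticalSO L Q) (hQ : ∀ i, Q i ∈ SOset p) (hdp : d ≤ p) :
    IsCriticalSt L (bigProj Q) := by
  intro γ hγ hfeas hγ0
  set V : Matrix (Fin p) (Fin n × Fin d) ℝ := fun a ib => deriv (fun t => γ t a ib) 0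
  have hV : ∀ a ib, HasDerivAt (fun t => γ t a ib) (V a ib) 0 := fun a ib =>
    ((hγ a ib).differentiable one_ne_zero 0).hasDerivAt
  have htangent : ∀ i,
      (blockCol V i)ᵀ * (Q i * Pmat d p) + (Q i * Pmat d p)ᵀ * blockCol V i = 0 := fun i => by
    have h := transpose_mul_add_transpose_mul_eq_zero_of_hasDerivAt
      (μ := fun t => blockCol (γ t) i) (fun t => hfeas t i) (fun a b => hV a (i, b))
    rwa [hγ0] at h
  choose Ω hΩskew hΩ using fun i =>
    exists_transpose_eq_neg_mul_mul_eq (hQ i).1 (Pmat_transpose_mul_self hdp) (htangent i)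
  have hVΩ : V = flatten fun i => Q i * Ω i * Pmat d p := by
    ext a ⟨i, b⟩
    exact congrFun (congrFun (hΩ i).symm a) b
  rw [(hasDerivAt_fObj L hV).deriv, hγ0, hVΩ]
  exact hcrit.trace_eq_zero hQ hΩskew

theorem statement8_general {n d p : ℕ} (hdp : d ≤ p)
    (E : Finset (Fin n × Fin n))
    (κ : Fin n × Fin n → ℝ)
    (Rbar : Fin n × Fin n → Matrix (Fin d) (Fin d) ℝ)
    (Qstar : Fin n → Matrix (Fin p) (Fin p) ℝ) (hQ : ∀ i, Qstar i ∈ SOset p)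
    (hcrit : IsCriticalSO (connLap E κ Rbar) Qstar) :
    IsCriticalSt (connLap E κ Rbar) (bigProj Qstar) :=
  hcrit.isCriticalSt_bigProj hQ hdp

/-- If `Q*` is a first-order critical point of the Shonan objective `g` on
`SO(p)^n`, then `S* = Π(Q*)` is a first-order critical point of `f` on `St(d,p)^n`. -/
theorem statement8 {n d p : ℕ} (hn : 1 ≤ n) (hd : 1 ≤ d) (hdp : d ≤ p)
    (E : Finset (Fin n × Fin n)) (hE : ∀ e ∈ E, e.1 < e.2)
    (κ : Fin n × Fin n → ℝ) (hκ : ∀ e ∈ E, 0 ≤ κ e)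
    (Rbar : Fin n × Fin n → Matrix (Fin d) (Fin d) ℝ)
    (hRbar : ∀ e ∈ E, Rbar e ∈ SOset d)
    (Qstar : Fin n → Matrix (Fin p) (Fin p) ℝ) (hQ : ∀ i, Qstar i ∈ SOset p)
    (hcrit : IsCriticalSO (connLap E κ Rbar) Qstar) :
    IsCriticalSt (connLap E κ Rbar) (bigProj Qstar) :=
  statement8_general hdp E κ Rbar Qstar hQ hcrit
end
end
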